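/- Fix a maximum level 𝓛 ∈ ℕ and let m denote the 2D Morton index. Let E = (x, y, ℓ) and Ê = (x̂, ŷ, ℓ̂) be quadrilateral elements with m(x, y) < m(x̂, ŷ) such that Ê is not a descendant of E. Then every descendant (x', y', ℓ') of E satisfies m(x, y) ≤ m(x', y') < m(x̂, ŷ); that is, refining E changes the Morton order only locally. -/

import Mathlib

/-!
With `k = 𝓛 - ℓ`, the Morton index of `(u, v)` is `4^k` times the level-`ℓ` Morton index of
`(u / 2^k, v / 2^k)` plus the Morton index of the remainders, which is below `4^k`. Hence the
descendants of `E` fill the block `[m(E), m(E) + 4^k)`, and, the Morton index being injective,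
an anchor whose index falls in this block lies in the square of `E`. An element anchored there is
a descendant of `E` or, if it is coarser, `E` itself; so `m(Ê)` lies beyond the block.
-/

/-- The 2D Morton index: bitwise interleaving of the binary digits of `x` and
`y` (with `L` digits). -/
def morton (L x y : ℕ) : ℕ :=
  ∑ i ∈ Finset.range L, ((x / 2 ^ i % 2) + 2 * (y / 2 ^ i % 2)) * 4 ^ i

/-- A quadrilateral element of level `l` in the 1:4 refinement of
`[0, 2^L]²` with maximum level `L`: anchor coordinates `(x, y)` divisible by
`2^(L - l)`. -/
def IsElement (L l x y : ℕ) : Prop :=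
  l ≤ L ∧ x < 2 ^ L ∧ y < 2 ^ L ∧ 2 ^ (L - l) ∣ x ∧ 2 ^ (L - l) ∣ y

/-- The element `(x', y')` of level `l'` is a descendant of the element
`(x, y)` of level `l`. -/
def Descendant (L l x y l' x' y' : ℕ) : Prop :=
  l ≤ l' ∧ x ≤ x' ∧ x' < x + 2 ^ (L - l) ∧ y ≤ y' ∧ y' < y + 2 ^ (L - l)

lemma Nat.div_eq_div_iff_of_dvd {a b q : ℕ} (hq : 0 < q) (hb : q ∣ b) :
    a / q = b / q ↔ b ≤ a ∧ a < b + q := by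
  obtain ⟨c, rfl⟩ := hb
  rw [Nat.mul_div_cancel_left _ hq, Nat.div_eq_iff hq, mul_comm c q]
  omega

lemma Nat.mod_two_pow_div_two_pow_mod_two {u i k : ℕ} (hik : i < k) :
    u % 2 ^ k / 2 ^ i % 2 = u / 2 ^ i % 2 := by
  rw [show 2 ^ k = 2 ^ i * 2 ^ (k - i) by rw [← pow_add, Nat.add_sub_cancel' hik.le],
    Nat.mod_mul_right_div_self]
  exact Nat.mod_mod_of_dvd _ (dvd_pow_self 2 (by omega))

lemma morton_add (k m u v : ℕ) :
    morton (k + m) u v =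
      4 ^ k * morton m (u / 2 ^ k) (v / 2 ^ k) + morton k (u % 2 ^ k) (v % 2 ^ k) := by
  rw [morton, Finset.sum_range_add, add_comm, morton, morton, Finset.mul_sum]
  congr 1
  · refine Finset.sum_congr rfl fun i _ => ?_
    rw [pow_add, pow_add, ← Nat.div_div_eq_div_mul, ← Nat.div_div_eq_div_mul]
    ring
  · refine Finset.sum_congr rfl fun i hi => ?_
    have hik := Finset.mem_range.1 hi
    rw [Nat.mod_two_pow_div_two_pow_mod_two hik, Nat.mod_two_pow_div_two_pow_mod_two hik]

lemma morton_succ (L u v : ℕ) :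
    morton (L + 1) u v = u % 2 + 2 * (v % 2) + 4 * morton L (u / 2) (v / 2) := by
  rw [add_comm L, morton_add, add_comm]
  simp [morton]

lemma morton_lt_four_pow {L u v : ℕ} (hu : u < 2 ^ L) (hv : v < 2 ^ L) :
    morton L u v < 4 ^ L := by
  induction L generalizing u v with
  | zero => simp [morton]
  | succ L ih =>
    rw [pow_succ'] at hu hv
    have := ih (Nat.div_lt_of_lt_mul hu) (Nat.div_lt_of_lt_mul hv)
    rw [morton_succ, pow_succ]
    omega

lemma morton_eq_morton_iff {L u v u' v' : ℕ} (hu : u < 2 ^ L) (hv : v < 2 ^ L)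
    (hu' : u' < 2 ^ L) (hv' : v' < 2 ^ L) :
    morton L u v = morton L u' v' ↔ u = u' ∧ v = v' := by
  refine ⟨fun h => ?_, fun ⟨rfl, rfl⟩ => rfl⟩
  induction L generalizing u v u' v' with
  | zero => simp_all
  | succ L ih =>
    rw [pow_succ'] at hu hv hu' hv'
    rw [morton_succ, morton_succ] at h
    have hhigh : morton L (u / 2) (v / 2) = morton L (u' / 2) (v' / 2) := by omega
    have := ih (Nat.div_lt_of_lt_mul hu) (Nat.div_lt_of_lt_mul hv)
      (Nat.div_lt_of_lt_mul hu') (Nat.div_lt_of_lt_mul hv') hhigh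
    omega

lemma morton_add_div_four_pow (k m u v : ℕ) :
    morton (k + m) u v / 4 ^ k = morton m (u / 2 ^ k) (v / 2 ^ k) := by
  rw [morton_add, add_comm, Nat.add_mul_div_left _ _ (by positivity),
    Nat.div_eq_of_lt (morton_lt_four_pow (Nat.mod_lt _ (by positivity))
      (Nat.mod_lt _ (by positivity))), zero_add]

lemma four_pow_dvd_morton_add {k m u v : ℕ} (hu : 2 ^ k ∣ u) (hv : 2 ^ k ∣ v) :
    4 ^ k ∣ morton (k + m) u v := by
  rw [morton_add, Nat.mod_eq_zero_of_dvd hu, Nat.mod_eq_zero_of_dvd hv]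
  simp [morton]

lemma div_two_pow_eq_of_morton_div_four_pow_eq {k m u v u' v' : ℕ}
    (hu : u < 2 ^ (k + m)) (hv : v < 2 ^ (k + m)) (hu' : u' < 2 ^ (k + m))
    (hv' : v' < 2 ^ (k + m))
    (h : morton (k + m) u v / 4 ^ k = morton (k + m) u' v' / 4 ^ k) :
    u / 2 ^ k = u' / 2 ^ k ∧ v / 2 ^ k = v' / 2 ^ k := by
  have hdiv {w : ℕ} (hw : w < 2 ^ (k + m)) : w / 2 ^ k < 2 ^ m :=
    Nat.div_lt_of_lt_mul (pow_add 2 k m ▸ hw)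
  rw [morton_add_div_four_pow, morton_add_div_four_pow] at h
  exact (morton_eq_morton_iff (hdiv hu) (hdiv hv) (hdiv hu') (hdiv hv')).1 h

lemma descendant_iff {L l l' x y x' y' : ℕ} (hx : 2 ^ (L - l) ∣ x) (hy : 2 ^ (L - l) ∣ y) :
    Descendant L l x y l' x' y' ↔
      l ≤ l' ∧ x' / 2 ^ (L - l) = x / 2 ^ (L - l) ∧ y' / 2 ^ (L - l) = y / 2 ^ (L - l) := by
  rw [Descendant, Nat.div_eq_div_iff_of_dvd (by positivity) hx,
    Nat.div_eq_div_iff_of_dvd (by positivity) hy]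
  simp only [and_assoc]

theorem morton_refinement_local_general (L l lh l' x y xh yh x' y' : ℕ)
    (hE : IsElement L l x y) (hEh : IsElement L lh xh yh)
    (hlt : morton L x y < morton L xh yh)
    (hnd : ¬ Descendant L l x y lh xh yh)
    (hdesc : Descendant L l x y l' x' y') :
    morton L x y ≤ morton L x' y' ∧ morton L x' y' < morton L xh yh := by
  obtain ⟨hlL, hx, hy, hdx, hdy⟩ := hE
  obtain ⟨-, hxh, hyh, hdxh, hdyh⟩ := hEh
  rw [descendant_iff hdx hdy] at hdesc hnd
  obtain ⟨k, rfl⟩ := Nat.exists_eq_add_of_le' hlL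
  simp only [Nat.add_sub_cancel] at hdx hdy hdesc hnd
  obtain ⟨-, hx', hy'⟩ := hdesc
  have hblock {a : ℕ} := Nat.div_eq_div_iff_of_dvd (a := a) (by positivity)
    (four_pow_dvd_morton_add (m := l) hdx hdy)
  obtain ⟨hle, hlt'⟩ := (hblock (a := morton (k + l) x' y')).1 <| by
    rw [morton_add_div_four_pow, morton_add_div_four_pow, hx', hy']
  refine ⟨hle, hlt'.trans_le (not_lt.1 fun hnear => ?_)⟩
  obtain ⟨hxhx, hyhy⟩ :=
    div_two_pow_eq_of_morton_div_four_pow_eq hxh hyh hx hy (hblock.2 ⟨hlt.le, hnear⟩)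
  rcases le_or_gt l lh with hllh | hlhl
  · exact hnd ⟨hllh, hxhx, hyhy⟩
  · have hdvd : 2 ^ k ∣ 2 ^ (k + l - lh) := pow_dvd_pow 2 (by omega)
    obtain rfl := (Nat.div_left_inj (hdvd.trans hdxh) hdx).1 hxhx
    obtain rfl := (Nat.div_left_inj (hdvd.trans hdyh) hdy).1 hyhy
    exact lt_irrefl _ hlt

/-- Locality of the Morton order: if `m(E) < m(Ê)` and `Ê` is not a
descendant of `E`, then every descendant of `E` has Morton index in
`[m(E), m(Ê))`. -/
theorem morton_refinement_local (L l lh l' x y xh yh x' y' : ℕ)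
    (hE : IsElement L l x y) (hEh : IsElement L lh xh yh)
    (hlt : morton L x y < morton L xh yh)
    (hnd : ¬ Descendant L l x y lh xh yh)
    (hE' : IsElement L l' x' y')
    (hdesc : Descendant L l x y l' x' y') :
    morton L x y ≤ morton L x' y' ∧ morton L x' y' < morton L xh yh :=
  morton_refinement_local_general L l lh l' x y xh yh x' y' hE hEh hlt hnd hdesc
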